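/- arXiv:2409.16903 — 4 statements merged into one kernel-verified Lean document; each statement's English description precedes it below -/
import Mathlib

section
/- Let f : ℝ → ℝ be a function of bounded variation on [a,b], and let 𝒫 be a partition of [a,b] into finitely many intervals X₁,…,X_K. Let f^𝒫 be the piecewise constant function which on each interval Xₙ takes a constant value lying between the infimum and supremum of f on Xₙ. Then ∫_a^b |f^𝒫(x) − f(x)| dx ≤ Var(f,[a,b]) · mesh(𝒫), where mesh(𝒫) is the maximum length of the intervals Xₙ and Var(f,[a,b]) is the total variation of f on [a,b]. -/
/-!
On each partition interval `Xᵢ` the value of `f^𝒫` lies between the infimum and the supremum of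
`f` on `Xᵢ`, so `|f^𝒫 - f| ≤ Var(f, Xᵢ)` there. Integrating, `Xᵢ` contributes at most
`Var(f, Xᵢ) · |Xᵢ| ≤ Var(f, Xᵢ) · mesh`, and the variations over consecutive intervals add up to
`Var(f, [a, b])`.
-/

open MeasureTheory Set

theorem BoundedVariationOn.abs_sub_le_of_sInf_le_of_le_sSup {α : Type*} [LinearOrder α]
    {f : α → ℝ} {s : Set α} (hf : BoundedVariationOn f s) {t : α} (ht : t ∈ s) {v : ℝ}
    (hv₁ : sInf (f '' s) ≤ v) (hv₂ : v ≤ sSup (f '' s)) :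
    |v - f t| ≤ (eVariationOn f s).toReal := by
  have hne : (f '' s).Nonempty := ⟨f t, mem_image_of_mem f ht⟩
  have hsup : sSup (f '' s) ≤ f t + (eVariationOn f s).toReal :=
    csSup_le hne <| forall_mem_image.2 fun u hu => by linarith [hf.sub_le hu ht]
  have hinf : f t - (eVariationOn f s).toReal ≤ sInf (f '' s) :=
    le_csInf hne <| forall_mem_image.2 fun u hu => by linarith [hf.sub_le ht hu]
  rw [abs_sub_le_iff]
  constructor <;> linarith

theorem eVariationOn.sum_Icc_fin {α E : Type*} [LinearOrder α] [PseudoEMetricSpace E]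
    (f : α → E) {n : ℕ} {x : Fin (n + 1) → α} (hx : Monotone x) :
    ∑ i : Fin n, eVariationOn f (Icc (x i.castSucc) (x i.succ)) =
      eVariationOn f (Icc (x 0) (x (Fin.last n))) := by
  induction n with
  | zero => simp
  | succ n ih =>
    have hinit := ih (hx.comp Fin.strictMono_castSucc.monotone)
    simp only [Function.comp_apply, ← Fin.succ_castSucc, Fin.castSucc_zero] at hinit
    rw [Fin.sum_univ_castSucc, hinit]
    simpa using eVariationOn.Icc_add_Icc f (s := univ) (hx (Fin.zero_le _))
      (hx (Fin.castSucc_le_succ (Fin.last n))) (mem_univ _)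

theorem Monotone.Ico_subset_iUnion_Ico_fin {α : Type*} [LinearOrder α] {n : ℕ}
    {x : Fin (n + 1) → α} (hx : Monotone x) :
    Ico (x 0) (x (Fin.last n)) ⊆ ⋃ i : Fin n, Ico (x i.castSucc) (x i.succ) := by
  induction n with
  | zero => simp
  | succ n ih =>
    intro t ht
    rcases lt_or_ge t (x (Fin.last n).castSucc) with h | h
    · have hinit := ih (hx.comp Fin.strictMono_castSucc.monotone)
      simp only [Function.comp_apply, ← Fin.succ_castSucc, Fin.castSucc_zero] at hinit
      obtain ⟨i, hi⟩ := mem_iUnion.1 (hinit ⟨ht.1, h⟩)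
      exact mem_iUnion.2 ⟨i.castSucc, hi⟩
    · exact mem_iUnion.2 ⟨Fin.last n, h, by simpa using ht.2⟩

open scoped ENNReal in
theorem setLIntegral_Icc_le_sum_of_le_on_Ico {n : ℕ} {x : Fin (n + 1) → ℝ} (hx : Monotone x)
    {g : ℝ → ℝ≥0∞} {C : Fin n → ℝ≥0∞}
    (hg : ∀ i, ∀ t ∈ Ico (x i.castSucc) (x i.succ), g t ≤ C i) :
    ∫⁻ t in Icc (x 0) (x (Fin.last n)), g t ≤
      ∑ i, C i * ENNReal.ofReal (x i.succ - x i.castSucc) :=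
  calc ∫⁻ t in Icc (x 0) (x (Fin.last n)), g t
      = ∫⁻ t in Ico (x 0) (x (Fin.last n)), g t := setLIntegral_congr Ico_ae_eq_Icc.symm
    _ ≤ ∫⁻ t in ⋃ i : Fin n, Ico (x i.castSucc) (x i.succ), g t :=
        lintegral_mono_set hx.Ico_subset_iUnion_Ico_fin
    _ ≤ ∑ i, ∫⁻ t in Ico (x i.castSucc) (x i.succ), g t :=
        (lintegral_iUnion_le _ _).trans_eq (tsum_fintype _)
    _ ≤ ∑ i, ∫⁻ _ in Ico (x i.castSucc) (x i.succ), C i :=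
        Finset.sum_le_sum fun i _ => setLIntegral_mono' measurableSet_Ico (hg i)
    _ = ∑ i, C i * ENNReal.ofReal (x i.succ - x i.castSucc) := by
        simp only [setLIntegral_const, Real.volume_Ico]

theorem setIntegral_abs_Icc_le_sum_of_le_on_Ico {n : ℕ} {x : Fin (n + 1) → ℝ}
    (hx : Monotone x) {g : ℝ → ℝ} {C : Fin n → ℝ} (hC : ∀ i, 0 ≤ C i)
    (hg : ∀ i, ∀ t ∈ Ico (x i.castSucc) (x i.succ), |g t| ≤ C i) :
    ∫ t in Icc (x 0) (x (Fin.last n)), |g t| ≤ ∑ i, C i * (x i.succ - x i.castSucc) := by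
  have hterm : ∀ i : Fin n, 0 ≤ C i * (x i.succ - x i.castSucc) := fun i =>
    mul_nonneg (hC i) (sub_nonneg.2 (hx (Fin.castSucc_le_succ i)))
  have hlint : ∫⁻ t in Icc (x 0) (x (Fin.last n)), ENNReal.ofReal |g t| ≤
      ENNReal.ofReal (∑ i, C i * (x i.succ - x i.castSucc)) := by
    rw [ENNReal.ofReal_sum_of_nonneg fun i _ => hterm i]
    simp_rw [ENNReal.ofReal_mul (hC _)]
    exact setLIntegral_Icc_le_sum_of_le_on_Ico hx fun i t ht =>
      ENNReal.ofReal_le_ofReal (hg i t ht)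
  calc ∫ t in Icc (x 0) (x (Fin.last n)), |g t|
      ≤ (∫⁻ t in Icc (x 0) (x (Fin.last n)), ENNReal.ofReal |g t|).toReal := by
        simpa only [Real.norm_eq_abs, abs_abs] using
          (le_abs_self _).trans (norm_integral_le_lintegral_norm fun t => |g t|)
    _ ≤ ∑ i, C i * (x i.succ - x i.castSucc) :=
        ENNReal.toReal_le_of_le_ofReal (Finset.sum_nonneg fun i _ => hterm i) hlint

theorem stmt1_general (a b : ℝ) (f fP : ℝ → ℝ)
    (hBV : BoundedVariationOn f (Set.Icc a b))
    (K : ℕ) (x : Fin (K + 1) → ℝ)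
    (hmono : StrictMono x) (hx0 : x 0 = a) (hxK : x (Fin.last K) = b)
    (hconst : ∀ i : Fin K, ∃ v : ℝ,
      sInf (f '' Set.Icc (x i.castSucc) (x i.succ)) ≤ v ∧
      v ≤ sSup (f '' Set.Icc (x i.castSucc) (x i.succ)) ∧
      ∀ t ∈ Set.Ico (x i.castSucc) (x i.succ), fP t = v)
    (mesh : ℝ) (hmesh : ∀ i : Fin K, x i.succ - x i.castSucc ≤ mesh) :
    ∫ t in Set.Icc a b, |fP t - f t| ≤ (eVariationOn f (Set.Icc a b)).toReal * mesh := by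
  subst hx0 hxK
  have hx := hmono.monotone
  have hBVi : ∀ i : Fin K, BoundedVariationOn f (Icc (x i.castSucc) (x i.succ)) := fun i =>
    hBV.mono (Icc_subset_Icc (hx (Fin.zero_le _)) (hx (Fin.le_last _)))
  calc ∫ t in Icc (x 0) (x (Fin.last K)), |fP t - f t|
      ≤ ∑ i, (eVariationOn f (Icc (x i.castSucc) (x i.succ))).toReal *
          (x i.succ - x i.castSucc) :=
        setIntegral_abs_Icc_le_sum_of_le_on_Ico hx (fun _ => ENNReal.toReal_nonneg)
          fun i t ht => by
            obtain ⟨v, hv₁, hv₂, hv⟩ := hconst i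
            rw [hv t ht]
            exact (hBVi i).abs_sub_le_of_sInf_le_of_le_sSup (Ico_subset_Icc_self ht) hv₁ hv₂
    _ ≤ ∑ i, (eVariationOn f (Icc (x i.castSucc) (x i.succ))).toReal * mesh :=
        Finset.sum_le_sum fun i _ => mul_le_mul_of_nonneg_left (hmesh i) ENNReal.toReal_nonneg
    _ = (eVariationOn f (Icc (x 0) (x (Fin.last K)))).toReal * mesh := by
        rw [← Finset.sum_mul, ← ENNReal.toReal_sum fun i _ => hBVi i, eVariationOn.sum_Icc_fin f hx]

/-- Poincaré-type inequality for piecewise constant approximations: if `f` has bounded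
variation on `[a,b]`, `a = x₀ < x₁ < ⋯ < x_K = b` is a partition, and `fP` is piecewise
constant on the partition intervals with value lying between the infimum and supremum of
`f` on the corresponding interval, then `∫_a^b |fP − f| ≤ Var(f,[a,b]) · mesh`, where
`mesh` bounds the lengths of the partition intervals. -/
theorem stmt1 (a b : ℝ) (f fP : ℝ → ℝ)
    (hBV : BoundedVariationOn f (Set.Icc a b))
    (K : ℕ) (hK : 0 < K) (x : Fin (K + 1) → ℝ)
    (hmono : StrictMono x) (hx0 : x 0 = a) (hxK : x (Fin.last K) = b)
    (hconst : ∀ i : Fin K, ∃ v : ℝ,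
      sInf (f '' Set.Icc (x i.castSucc) (x i.succ)) ≤ v ∧
      v ≤ sSup (f '' Set.Icc (x i.castSucc) (x i.succ)) ∧
      ∀ t ∈ Set.Ico (x i.castSucc) (x i.succ), fP t = v)
    (mesh : ℝ) (hmesh : ∀ i : Fin K, x i.succ - x i.castSucc ≤ mesh) :
    ∫ t in Set.Icc a b, |fP t - f t| ≤ (eVariationOn f (Set.Icc a b)).toReal * mesh :=
  stmt1_general a b f fP hBV K x hmono hx0 hxK hconst mesh hmesh
end

section
/- Let T be a bounded linear operator on L¹[0,1] with spectral radius ρ(T) > 1, and assume T maps nonnegative functions to nonnegative functions and is monotone (f ≤ g pointwise a.e. implies Tf ≤ Tg). Then there exists a nonnegative function g ∈ L¹[0,1] with ‖g‖_{L¹} ≤ 1 such that ‖Tⁿ g‖_{L¹} → ∞ as n → ∞. -/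
/-!
Since `ρ(T)ⁿ ≤ ρ(Tⁿ) ≤ ‖Tⁿ‖`, there is `r > 1` with `‖Tⁿ‖ > rⁿ` for all `n ≥ 1`. Because a
positive operator on a Banach lattice satisfies `|T x| ≤ T |x|`, the norm is almost attained at
nonnegative unit vectors `hₙ`: `‖Tⁿ hₙ‖ ≥ rⁿ`. With weights `γ ∈ (r⁻¹, 1)`, the vector
`g = Σ (1 - γ) γⁿ hₙ` lies in the positive part of the unit ball and dominates each `(1 - γ) γⁿ hₙ`,
so monotonicity gives `‖Tⁿ⁺¹ g‖ ≥ (1 - γ) r (γ r)ⁿ → ∞`.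
-/

open MeasureTheory Filter

instance MeasureTheory.Lp.instPosSMulMono {α : Type*} [MeasurableSpace α] {μ : Measure α}
    {p : ENNReal} : PosSMulMono ℝ (Lp ℝ p μ) :=
  .of_smul_nonneg fun c hc f hf => by
    rw [← Lp.coeFn_nonneg] at hf ⊢
    filter_upwards [Lp.coeFn_smul c f, hf] with x hx hfx
    simpa [hx] using mul_nonneg hc hfx

theorem pow_lt_norm_pow_of_lt_spectralRadius {𝕜 A : Type*} [NormedField 𝕜] [NormedRing A]
    [NormedAlgebra 𝕜 A] [CompleteSpace A] [NormOneClass A] {a : A} {r : NNReal}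
    (hr : r < spectralRadius 𝕜 a) {n : ℕ} (hn : n ≠ 0) : (r : ℝ) ^ n < ‖a ^ n‖ := by
  have : ((r ^ n : NNReal) : ENNReal) < ‖a ^ n‖₊ :=
    calc ((r ^ n : NNReal) : ENNReal) = (r : ENNReal) ^ n := ENNReal.coe_pow r n
      _ < spectralRadius 𝕜 a ^ n := ENNReal.pow_lt_pow_left hn hr
      _ ≤ spectralRadius 𝕜 (a ^ n) := spectrum.spectralRadius_pow_le a n hn
      _ ≤ ‖a ^ n‖₊ := spectrum.spectralRadius_le_nnnorm (a ^ n)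
  exact_mod_cast this

theorem norm_le_norm_of_nonneg_of_le {E : Type*} [NormedAddCommGroup E] [Lattice E]
    [HasSolidNorm E] [IsOrderedAddMonoid E] {a b : E} (ha : 0 ≤ a) (hab : a ≤ b) : ‖a‖ ≤ ‖b‖ :=
  norm_le_norm_of_abs_le_abs <| by rwa [abs_of_nonneg ha, abs_of_nonneg (ha.trans hab)]

namespace ContinuousLinearMap

section Preorder

variable {M : Type*} [TopologicalSpace M] [AddCommGroup M] [Module ℝ M] [Preorder M]
  {S : M →L[ℝ] M}

theorem monotone_pow (hS : Monotone S) (n : ℕ) : Monotone (S ^ n) := by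
  induction n with
  | zero => simpa using monotone_id
  | succ n ih => rw [pow_succ']; exact fun a b hab => hS (ih hab)

theorem map_nonneg_of_monotone (hS : Monotone S) {x : M} (hx : 0 ≤ x) : 0 ≤ S x := by
  simpa using hS hx

end Preorder

variable {E : Type*} [NormedAddCommGroup E] [Lattice E] [NormedSpace ℝ E] {S : E →L[ℝ] E}

theorem abs_apply_le_apply_abs (hS : Monotone S) (x : E) : |S x| ≤ S |x| :=
  abs_le'.2 ⟨hS (le_abs_self x), by simpa only [map_neg] using hS (neg_le_abs x)⟩

variable [HasSolidNorm E] [IsOrderedAddMonoid E]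

theorem exists_nonneg_norm_le_one_lt_norm_apply (hS : Monotone S) {r : ℝ} (hr : r < ‖S‖) :
    ∃ f, 0 ≤ f ∧ ‖f‖ ≤ 1 ∧ r < ‖S f‖ := by
  obtain ⟨x, hx, hrx⟩ := S.exists_lt_apply_of_lt_opNorm hr
  refine ⟨|x|, abs_nonneg x, (norm_abs_eq_norm x).trans_le hx.le, hrx.trans_le ?_⟩
  refine norm_le_norm_of_abs_le_abs ((abs_apply_le_apply_abs hS x).trans_eq ?_)
  exact (abs_of_nonneg (map_nonneg_of_monotone hS (abs_nonneg x))).symm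

theorem mul_norm_apply_le_norm_apply [PosSMulMono ℝ E] (hS : Monotone S) {c : ℝ} (hc : 0 ≤ c)
    {f g : E} (hf : 0 ≤ f) (hfg : c • f ≤ g) : c * ‖S f‖ ≤ ‖S g‖ := by
  rw [← Real.norm_of_nonneg hc, ← norm_smul, ← map_smul]
  exact norm_le_norm_of_nonneg_of_le (map_nonneg_of_monotone hS (smul_nonneg hc hf)) (hS hfg)

end ContinuousLinearMap

theorem exists_nonneg_norm_le_one_forall_geometric_smul_le {E : Type*} [NormedAddCommGroup E]
    [PartialOrder E] [IsOrderedAddMonoid E] [NormedSpace ℝ E] [PosSMulMono ℝ E]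
    [OrderClosedTopology E] [CompleteSpace E] {h : ℕ → E} (h₀ : ∀ n, 0 ≤ h n)
    (h₁ : ∀ n, ‖h n‖ ≤ 1) {γ : ℝ} (hγ₀ : 0 ≤ γ) (hγ₁ : γ < 1) :
    ∃ g, 0 ≤ g ∧ ‖g‖ ≤ 1 ∧ ∀ n, ((1 - γ) * γ ^ n) • h n ≤ g := by
  set c : ℕ → ℝ := fun n => (1 - γ) * γ ^ n
  have hc₀ : ∀ n, 0 ≤ c n := fun n => by positivity
  have hc : HasSum c 1 := by
    simpa [c, mul_inv_cancel₀ (sub_ne_zero.2 hγ₁.ne')] using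
      (hasSum_geometric_of_lt_one hγ₀ hγ₁).mul_left (1 - γ)
  have hbound : ∀ n, ‖c n • h n‖ ≤ c n := fun n => by
    simpa [norm_smul, abs_of_nonneg (hc₀ n)] using mul_le_of_le_one_right (hc₀ n) (h₁ n)
  have hterm₀ : ∀ n, 0 ≤ c n • h n := fun n => smul_nonneg (hc₀ n) (h₀ n)
  have hsum : Summable fun n => c n • h n := .of_norm_bounded hc.summable hbound
  exact ⟨∑' n, c n • h n, tsum_nonneg hterm₀, tsum_of_norm_bounded hc hbound,
    fun n => hsum.le_tsum n fun j _ => hterm₀ j⟩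

theorem exists_nonneg_norm_le_one_tendsto_norm_pow_apply_atTop {E : Type*}
    [NormedAddCommGroup E] [Lattice E] [HasSolidNorm E] [IsOrderedAddMonoid E] [NormedSpace ℝ E]
    [PosSMulMono ℝ E] [OrderClosedTopology E] [CompleteSpace E] {S : E →L[ℝ] E}
    (hS : Monotone S) (hρ : 1 < spectralRadius ℝ S) :
    ∃ g, 0 ≤ g ∧ ‖g‖ ≤ 1 ∧ Tendsto (fun n : ℕ => ‖(S ^ n) g‖) atTop atTop := by
  obtain hE | hE := subsingleton_or_nontrivial E
  · simp at hρ
  obtain ⟨r, hr₁, hrρ⟩ := ENNReal.lt_iff_exists_nnreal_btwn.1 hρ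
  replace hr₁ : (1 : ℝ) < r := by exact_mod_cast hr₁
  have hSpow := ContinuousLinearMap.monotone_pow hS
  choose h h₀ h₁ hh using fun n : ℕ =>
    ContinuousLinearMap.exists_nonneg_norm_le_one_lt_norm_apply (hSpow (n + 1))
      (pow_lt_norm_pow_of_lt_spectralRadius hrρ n.succ_ne_zero)
  obtain ⟨γ, hrγ, hγ₁⟩ := exists_between (inv_lt_one_of_one_lt₀ hr₁)
  have hγ₀ : 0 < γ := (inv_pos.2 (zero_lt_one.trans hr₁)).trans hrγ
  have hγr : 1 < γ * r := by rwa [inv_lt_iff_one_lt_mul₀ (by positivity)] at hrγ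
  have hc₀ (n : ℕ) : 0 ≤ (1 - γ) * γ ^ n := mul_nonneg (sub_nonneg.2 hγ₁.le) (by positivity)
  obtain ⟨g, hg₀, hg₁, hhg⟩ :=
    exists_nonneg_norm_le_one_forall_geometric_smul_le h₀ h₁ hγ₀.le hγ₁
  have hgrowth (n : ℕ) : (1 - γ) * r * (γ * r) ^ n ≤ ‖(S ^ (n + 1)) g‖ :=
    calc (1 - γ) * r * (γ * r) ^ n = ((1 - γ) * γ ^ n) * (r : ℝ) ^ (n + 1) := by ring
      _ ≤ ((1 - γ) * γ ^ n) * ‖(S ^ (n + 1)) (h n)‖ :=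
        mul_le_mul_of_nonneg_left (hh n).le (hc₀ n)
      _ ≤ ‖(S ^ (n + 1)) g‖ :=
        ContinuousLinearMap.mul_norm_apply_le_norm_apply (hSpow (n + 1)) (hc₀ n) (h₀ n) (hhg n)
  refine ⟨g, hg₀, hg₁, (tendsto_add_atTop_iff_nat 1).1 (tendsto_atTop_mono hgrowth ?_)⟩
  exact (tendsto_pow_atTop_atTop_of_one_lt hγr).const_mul_atTop
    (mul_pos (sub_pos.2 hγ₁) (by positivity))

theorem stmt9_general
    (T : Lp ℝ 1 ((volume : Measure ℝ).restrict (Set.Icc (0 : ℝ) 1)) →L[ℝ]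
         Lp ℝ 1 ((volume : Measure ℝ).restrict (Set.Icc (0 : ℝ) 1)))
    (hρ : 1 < spectralRadius ℝ T)
    (hmono : ∀ f g, f ≤ g → T f ≤ T g) :
    ∃ g, 0 ≤ g ∧ ‖g‖ ≤ 1 ∧
      Tendsto (fun n : ℕ => ‖(T ^ n) g‖) atTop atTop :=
  exists_nonneg_norm_le_one_tendsto_norm_pow_apply_atTop (fun f g => hmono f g) hρ

/-- If `T` is a positive, monotone bounded operator on `L¹[0,1]` with spectral radius
`ρ(T) > 1`, then there exists a nonnegative `g ∈ L¹[0,1]` with `‖g‖ ≤ 1` such that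
`‖Tⁿ g‖ → ∞`. -/
theorem stmt9
    (T : Lp ℝ 1 ((volume : Measure ℝ).restrict (Set.Icc (0 : ℝ) 1)) →L[ℝ]
         Lp ℝ 1 ((volume : Measure ℝ).restrict (Set.Icc (0 : ℝ) 1)))
    (hρ : 1 < spectralRadius ℝ T)
    (hpos : ∀ f, 0 ≤ f → 0 ≤ T f)
    (hmono : ∀ f g, f ≤ g → T f ≤ T g) :
    ∃ g, 0 ≤ g ∧ ‖g‖ ≤ 1 ∧
      Tendsto (fun n : ℕ => ‖(T ^ n) g‖) atTop atTop :=
  stmt9_general T hρ hmono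
end

section
/- Fix t > 0, p ∈ [1,∞), and a constant C = ‖h‖_∞ C_B C_W ≥ 0. Let Φ be a map on families ξ = (ξ_x)_{x∈[0,1]} of measurable functions with values in [0,1] satisfying the Lipschitz-type bound: for all u ∈ [0,t] and all inputs f, ∫₀¹ |Φ_x(ξ)(f,u) − Φ_x(ζ)(f,u)|^p dx ≤ C^p ∫₀¹ (∫₀ᵘ |ξ_y(f,s) − ζ_y(f,s)| ds)^p dy. Then for the iterates ξ⁽ⁿ⁾ = Φ(ξ⁽ⁿ⁻¹⁾), ζ⁽ⁿ⁾ = Φ(ζ⁽ⁿ⁻¹⁾) starting from any [0,1]-valued families ξ⁽⁰⁾, ζ⁽⁰⁾ with the convention C replaced by 2‖h‖_∞ C_B C_W in the base case, one has for every n ≥ 1, u ∈ [0,t], and f: ‖ξ_x⁽ⁿ⁾(f,u) − ζ_x⁽ⁿ⁾(f,u)‖_{L^p([0,1],dx)} ≤ (2‖h‖_∞ C_B C_W)ⁿ uⁿ / n!. -/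
/-!
Write `Dₙ(x, s) = |ξ⁽ⁿ⁾_x(f, s) − ζ⁽ⁿ⁾_x(f, s)|`. Combined with Minkowski's integral inequality,
the Lipschitz bound gives `‖Dₙ₊₁(·, u)‖_p ≤ C ∫₀ᵘ ‖Dₙ(·, s)‖_p ds`, while `‖D₀(·, u)‖_p ≤ 1`
because all values lie in `[0,1]`. By induction `‖Dₙ(·, u)‖_p ≤ Cⁿ uⁿ / n! ≤ (2C)ⁿ uⁿ / n!`.
-/

open MeasureTheory Set Function
open scoped ENNReal

theorem Real.rpow_mem_Icc_of_mem_Icc {x M z : ℝ} (hx : x ∈ Icc 0 M) (hz : 0 ≤ z) :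
    x ^ z ∈ Icc 0 (M ^ z) :=
  ⟨Real.rpow_nonneg hx.1 z, Real.rpow_le_rpow hx.1 hx.2 hz⟩

section Minkowski

variable {α β : Type*} [MeasurableSpace α] [MeasurableSpace β] {μ : Measure α} {ν : Measure β}

/-- Minkowski's integral inequality, for a left-hand side known to be finite. -/
theorem ENNReal.lintegral_Lp_lintegral_le [SFinite μ] [SFinite ν] {g : α → β → ℝ≥0∞}
    (hg : Measurable (uncurry g)) {p : ℝ} (hp : 1 ≤ p)
    (hfin : ∫⁻ x, (∫⁻ y, g x y ∂ν) ^ p ∂μ ≠ ∞) :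
    (∫⁻ x, (∫⁻ y, g x y ∂ν) ^ p ∂μ) ^ (1 / p) ≤ ∫⁻ y, (∫⁻ x, g x y ^ p ∂μ) ^ (1 / p) ∂ν := by
  rcases hp.eq_or_lt with rfl | hp1
  · simpa using (lintegral_lintegral_swap hg.aemeasurable).le
  set q := p.conjExponent
  have hpq : p.HolderConjugate q := .conjExponent hp1
  set F : α → ℝ≥0∞ := fun x => ∫⁻ y, g x y ∂ν
  set I := ∫⁻ x, F x ^ p ∂μ
  set J := ∫⁻ y, (∫⁻ x, g x y ^ p ∂μ) ^ (1 / p) ∂ν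
  have hF : Measurable F := hg.lintegral_prod_right'
  have hIq : I ^ (1 / q) ≠ ∞ := ENNReal.rpow_ne_top_of_nonneg (by simp [hpq.symm.nonneg]) hfin
  -- Write `F ^ p = F ^ (p - 1) * ∫ g` and apply Hölder in `x` with exponents `q` and `p`.
  have hI : I ≤ I ^ (1 / q) * J := by
    calc I = ∫⁻ x, ∫⁻ y, F x ^ (p - 1) * g x y ∂ν ∂μ := by
          refine lintegral_congr fun x => ?_
          have hgx : Measurable (g x) := hg.comp measurable_prodMk_left
          rw [lintegral_const_mul _ hgx]
          conv_lhs => rw [show p = (p - 1) + 1 by ring]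
          rw [ENNReal.rpow_add_of_nonneg _ _ (by linarith) zero_le_one, ENNReal.rpow_one]
      _ = ∫⁻ y, ∫⁻ x, F x ^ (p - 1) * g x y ∂μ ∂ν :=
          lintegral_lintegral_swap ((hF.comp measurable_fst).pow_const _ |>.mul hg).aemeasurable
      _ ≤ ∫⁻ y, I ^ (1 / q) * (∫⁻ x, g x y ^ p ∂μ) ^ (1 / p) ∂ν := by
          refine lintegral_mono fun y => ?_
          calc ∫⁻ x, F x ^ (p - 1) * g x y ∂μ
              ≤ (∫⁻ x, (F x ^ (p - 1)) ^ q ∂μ) ^ (1 / q) * (∫⁻ x, g x y ^ p ∂μ) ^ (1 / p) :=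
                ENNReal.lintegral_mul_le_Lp_mul_Lq μ hpq.symm (hF.pow_const _).aemeasurable
                  (hg.comp (measurable_prodMk_right (y := y))).aemeasurable
            _ = I ^ (1 / q) * (∫⁻ x, g x y ^ p ∂μ) ^ (1 / p) := by
                simp_rw [← ENNReal.rpow_mul, hpq.sub_one_mul_conj]; rfl
      _ = I ^ (1 / q) * J := lintegral_const_mul' _ _ hIq
  rcases eq_or_ne I 0 with hI0 | hI0
  · rw [hI0, ENNReal.zero_rpow_of_pos (by positivity)]
    exact zero_le
  have hsplit : I = I ^ (1 / q) * I ^ (1 / p) := by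
    rw [← ENNReal.rpow_add_of_nonneg _ _ (by simp [hpq.symm.nonneg]) (by simp [hpq.nonneg]),
      one_div, one_div, add_comm, hpq.inv_add_inv_eq_one, ENNReal.rpow_one]
  nth_rewrite 1 [hsplit] at hI
  exact (ENNReal.mul_le_mul_iff_right (ENNReal.rpow_pos (pos_iff_ne_zero.2 hI0) hfin).ne' hIq).1 hI

theorem integral_mem_Icc_of_mem_Icc [IsFiniteMeasure μ] {f : α → ℝ} {M : ℝ}
    (hf : ∀ x, f x ∈ Icc 0 M) : ∫ x, f x ∂μ ∈ Icc 0 (M * μ.real univ) :=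
  ⟨integral_nonneg fun x => (hf x).1, (le_abs_self _).trans <|
    norm_integral_le_of_norm_le_const <| ae_of_all _ fun x => by
      rw [Real.norm_of_nonneg (hf x).1]; exact (hf x).2⟩

theorem ofReal_integral_of_mem_Icc [IsFiniteMeasure μ] {f : α → ℝ} (hf : Measurable f) {M : ℝ}
    (hfM : ∀ x, f x ∈ Icc 0 M) :
    ENNReal.ofReal (∫ x, f x ∂μ) = ∫⁻ x, ENNReal.ofReal (f x) ∂μ :=
  ofReal_integral_eq_lintegral_ofReal
    (.of_bound hf.aestronglyMeasurable M <| ae_of_all _ fun x => by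
      rw [Real.norm_of_nonneg (hfM x).1]; exact (hfM x).2)
    (ae_of_all _ fun x => (hfM x).1)

theorem integral_Lp_integral_le [IsFiniteMeasure μ] [IsFiniteMeasure ν] {d : α → β → ℝ}
    (hd : Measurable (uncurry d)) {M : ℝ} (hdM : ∀ x y, d x y ∈ Icc 0 M) {p : ℝ}
    (hp : 1 ≤ p) :
    (∫ x, (∫ y, d x y ∂ν) ^ p ∂μ) ^ (1 / p) ≤ ∫ y, (∫ x, d x y ^ p ∂μ) ^ (1 / p) ∂ν := by
  have hp0 : 0 ≤ p := by linarith
  have hdp : ∀ x y, d x y ^ p ∈ Icc 0 (M ^ p) :=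
    fun x y => Real.rpow_mem_Icc_of_mem_Icc (hdM x y) hp0
  have hF : ∀ x, ∫ y, d x y ∂ν ∈ Icc 0 (M * ν.real univ) :=
    fun x => integral_mem_Icc_of_mem_Icc (hdM x)
  have hG : ∀ y, ∫ x, d x y ^ p ∂μ ∈ Icc 0 (M ^ p * μ.real univ) :=
    fun y => integral_mem_Icc_of_mem_Icc (hdp · y)
  have hFp := fun x => Real.rpow_mem_Icc_of_mem_Icc (hF x) hp0
  have hGp := fun y => Real.rpow_mem_Icc_of_mem_Icc (hG y) (z := 1 / p) (by positivity)
  have lhs : ∫⁻ x, (∫⁻ y, ENNReal.ofReal (d x y) ∂ν) ^ p ∂μ =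
      ENNReal.ofReal (∫ x, (∫ y, d x y ∂ν) ^ p ∂μ) := by
    have hFm : Measurable fun x => (∫ y, d x y ∂ν) ^ p :=
      (hd.stronglyMeasurable.integral_prod_right').measurable.pow_const p
    rw [ofReal_integral_of_mem_Icc hFm hFp]
    refine lintegral_congr fun x => ?_
    have hdx : Measurable (d x) := hd.comp measurable_prodMk_left
    rw [← ofReal_integral_of_mem_Icc hdx (hdM x), ENNReal.ofReal_rpow_of_nonneg (hF x).1 hp0]
  have rhs : ∀ y, (∫⁻ x, ENNReal.ofReal (d x y) ^ p ∂μ) ^ (1 / p) =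
      ENNReal.ofReal ((∫ x, d x y ^ p ∂μ) ^ (1 / p)) := fun y => by
    have hdy : Measurable fun x => d x y ^ p := (hd.comp measurable_prodMk_right).pow_const p
    rw [← ENNReal.ofReal_rpow_of_nonneg (hG y).1 (by positivity),
      ofReal_integral_of_mem_Icc hdy (hdp · y)]
    simp_rw [ENNReal.ofReal_rpow_of_nonneg (hdM _ y).1 hp0]
  have key := ENNReal.lintegral_Lp_lintegral_le hd.ennreal_ofReal hp (lhs ▸ ENNReal.ofReal_ne_top)
  rw [lhs, ENNReal.ofReal_rpow_of_nonneg (integral_nonneg fun x => (hFp x).1) (by positivity)]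
    at key
  simp_rw [rhs] at key
  have hGm : Measurable fun y => (∫ x, d x y ^ p ∂μ) ^ (1 / p) :=
    ((hd.pow_const p).stronglyMeasurable.integral_prod_left').measurable.pow_const _
  rwa [← ofReal_integral_of_mem_Icc hGm hGp,
    ENNReal.ofReal_le_ofReal_iff (integral_nonneg fun y => (hGp y).1)] at key

end Minkowski

theorem integral_Icc_mul_pow (K : ℝ) (n : ℕ) {u : ℝ} (hu : 0 ≤ u) :
    ∫ s in Icc (0 : ℝ) u, K * s ^ n = K * (u ^ (n + 1) / (n + 1)) := by
  rw [integral_Icc_eq_integral_Ioc, ← intervalIntegral.integral_of_le hu,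
    intervalIntegral.integral_const_mul, integral_pow]
  simp

section Iteration

variable {ι : Type*}

def IsMeasurableUnitFamily (ξ : ℝ → ι → ℝ → ℝ) : Prop :=
  (∀ x f u, ξ x f u ∈ Icc (0 : ℝ) 1) ∧ ∀ f, Measurable fun q : ℝ × ℝ => ξ q.1 f q.2

/-- `‖ξ_x(f,u) − ζ_x(f,u)‖_{L^p([0,1], dx)}`. -/
noncomputable def lpDist (p : ℝ) (ξ ζ : ℝ → ι → ℝ → ℝ) (f : ι) (u : ℝ) : ℝ :=
  (∫ x in Icc (0 : ℝ) 1, |ξ x f u - ζ x f u| ^ p) ^ (1 / p)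

variable {ξ ζ : ℝ → ι → ℝ → ℝ} {p : ℝ}

theorem IsMeasurableUnitFamily.abs_sub_mem_Icc (hξ : IsMeasurableUnitFamily ξ)
    (hζ : IsMeasurableUnitFamily ζ) (x : ℝ) (f : ι) (u : ℝ) :
    |ξ x f u - ζ x f u| ∈ Icc (0 : ℝ) 1 :=
  ⟨abs_nonneg _, abs_sub_le_of_nonneg_of_le (hξ.1 x f u).1 (hξ.1 x f u).2
    (hζ.1 x f u).1 (hζ.1 x f u).2⟩

theorem IsMeasurableUnitFamily.measurable_abs_sub (hξ : IsMeasurableUnitFamily ξ)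
    (hζ : IsMeasurableUnitFamily ζ) (f : ι) :
    Measurable (uncurry fun x s => |ξ x f s - ζ x f s|) :=
  ((hξ.2 f).sub (hζ.2 f)).abs

theorem lpDist_nonneg (ξ ζ : ℝ → ι → ℝ → ℝ) (f : ι) (u : ℝ) : 0 ≤ lpDist p ξ ζ f u :=
  Real.rpow_nonneg (integral_nonneg fun _ => Real.rpow_nonneg (abs_nonneg _) p) _

theorem lpDist_le_one (hp : 0 < p) (hξ : IsMeasurableUnitFamily ξ)
    (hζ : IsMeasurableUnitFamily ζ) (f : ι) (u : ℝ) : lpDist p ξ ζ f u ≤ 1 := by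
  have hmem := integral_mem_Icc_of_mem_Icc (μ := volume.restrict (Icc (0 : ℝ) 1))
    fun x => Real.rpow_mem_Icc_of_mem_Icc (hξ.abs_sub_mem_Icc hζ x f u) hp.le
  simp only [Real.one_rpow, measureReal_restrict_apply_univ, Real.volume_real_Icc, sub_zero,
    zero_le_one, max_eq_left, mul_one] at hmem
  exact Real.rpow_le_one hmem.1 hmem.2 (by positivity)

theorem lpDist_le_mul_integral_lpDist {ξ' ζ' : ℝ → ι → ℝ → ℝ} {C u : ℝ} (hC : 0 ≤ C)
    (hp : 1 ≤ p) (hξ : IsMeasurableUnitFamily ξ) (hζ : IsMeasurableUnitFamily ζ) (f : ι)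
    (hLip : ∫ x in Icc (0 : ℝ) 1, |ξ' x f u - ζ' x f u| ^ p ≤
      C ^ p * ∫ y in Icc (0 : ℝ) 1, (∫ s in Icc (0 : ℝ) u, |ξ y f s - ζ y f s|) ^ p) :
    lpDist p ξ' ζ' f u ≤ C * ∫ s in Icc (0 : ℝ) u, lpDist p ξ ζ f s := by
  have hp0 : 0 < p := by linarith
  set X := ∫ y in Icc (0 : ℝ) 1, (∫ s in Icc (0 : ℝ) u, |ξ y f s - ζ y f s|) ^ p
  have hX : 0 ≤ X :=
    integral_nonneg fun y => Real.rpow_nonneg (integral_nonneg fun s => abs_nonneg _) p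
  calc lpDist p ξ' ζ' f u
      ≤ (C ^ p * X) ^ (1 / p) :=
        Real.rpow_le_rpow (integral_nonneg fun _ => Real.rpow_nonneg (abs_nonneg _) p) hLip
          (by positivity)
    _ = C * X ^ (1 / p) := by
        rw [Real.mul_rpow (Real.rpow_nonneg hC p) hX, ← Real.rpow_mul hC,
          mul_one_div_cancel hp0.ne', Real.rpow_one]
    _ ≤ C * ∫ s in Icc (0 : ℝ) u, lpDist p ξ ζ f s :=
        mul_le_mul_of_nonneg_left (integral_Lp_integral_le (hξ.measurable_abs_sub hζ f)
          (hξ.abs_sub_mem_Icc hζ · f) hp) hC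

theorem lpDist_iterate_le {Φ : (ℝ → ι → ℝ → ℝ) → (ℝ → ι → ℝ → ℝ)} {t C : ℝ} (hC : 0 ≤ C)
    (hp : 1 ≤ p) (hΦ : ∀ ξ, IsMeasurableUnitFamily ξ → IsMeasurableUnitFamily (Φ ξ))
    (hLip : ∀ ξ ζ, IsMeasurableUnitFamily ξ → IsMeasurableUnitFamily ζ →
      ∀ f : ι, ∀ u ∈ Icc (0 : ℝ) t,
        ∫ x in Icc (0 : ℝ) 1, |Φ ξ x f u - Φ ζ x f u| ^ p ≤
          C ^ p * ∫ y in Icc (0 : ℝ) 1, (∫ s in Icc (0 : ℝ) u, |ξ y f s - ζ y f s|) ^ p)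
    (hξ : IsMeasurableUnitFamily ξ) (hζ : IsMeasurableUnitFamily ζ) (n : ℕ) (f : ι) :
    ∀ u ∈ Icc (0 : ℝ) t, lpDist p (Φ^[n] ξ) (Φ^[n] ζ) f u ≤ C ^ n / n.factorial * u ^ n := by
  induction n with
  | zero =>
    intro u _
    simpa using lpDist_le_one (by linarith) hξ hζ f u
  | succ n ih =>
    intro u hu
    have hξn := Iterate.rec IsMeasurableUnitFamily hξ hΦ n
    have hζn := Iterate.rec IsMeasurableUnitFamily hζ hΦ n
    simp only [iterate_succ_apply']
    calc lpDist p (Φ (Φ^[n] ξ)) (Φ (Φ^[n] ζ)) f u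
        ≤ C * ∫ s in Icc (0 : ℝ) u, lpDist p (Φ^[n] ξ) (Φ^[n] ζ) f s :=
          lpDist_le_mul_integral_lpDist hC hp hξn hζn f (hLip _ _ hξn hζn f u hu)
      _ ≤ C * ∫ s in Icc (0 : ℝ) u, C ^ n / n.factorial * s ^ n := by
          refine mul_le_mul_of_nonneg_left (integral_mono_of_nonneg
            (ae_of_all _ fun s => lpDist_nonneg _ _ f s)
            ((continuous_const.mul (continuous_pow n)).integrableOn_Icc) ?_) hC
          filter_upwards [ae_restrict_mem measurableSet_Icc] with s hs
          exact ih s ⟨hs.1, hs.2.trans hu.2⟩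
      _ = C ^ (n + 1) / (n + 1).factorial * u ^ (n + 1) := by
          rw [integral_Icc_mul_pow _ _ hu.1, Nat.factorial_succ]
          push_cast
          field_simp
          ring

end Iteration

theorem stmt13_general {ι : Type*} (t C p : ℝ) (hC : 0 ≤ C) (hp : 1 ≤ p)
    (Φ : (ℝ → ι → ℝ → ℝ) → (ℝ → ι → ℝ → ℝ))
    (hrange : ∀ ξ, (∀ x f u, ξ x f u ∈ Set.Icc (0 : ℝ) 1) →
      ∀ x f u, Φ ξ x f u ∈ Set.Icc (0 : ℝ) 1)
    (hmeas : ∀ ξ, (∀ x f u, ξ x f u ∈ Set.Icc (0 : ℝ) 1) →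
      ∀ f : ι, Measurable (fun q : ℝ × ℝ => Φ ξ q.1 f q.2))
    (hLip : ∀ ξ ζ, (∀ x f u, ξ x f u ∈ Set.Icc (0 : ℝ) 1) →
      (∀ x f u, ζ x f u ∈ Set.Icc (0 : ℝ) 1) →
      ∀ f : ι, ∀ u ∈ Set.Icc (0 : ℝ) t,
        ∫ x in Set.Icc (0 : ℝ) 1, |Φ ξ x f u - Φ ζ x f u| ^ p ≤
          C ^ p * ∫ y in Set.Icc (0 : ℝ) 1,
            (∫ s in Set.Icc (0 : ℝ) u, |ξ y f s - ζ y f s|) ^ p)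
    (ξ0 ζ0 : ℝ → ι → ℝ → ℝ)
    (hξ0 : ∀ x f u, ξ0 x f u ∈ Set.Icc (0 : ℝ) 1)
    (hζ0 : ∀ x f u, ζ0 x f u ∈ Set.Icc (0 : ℝ) 1)
    (hξ0m : ∀ f : ι, Measurable (fun q : ℝ × ℝ => ξ0 q.1 f q.2))
    (hζ0m : ∀ f : ι, Measurable (fun q : ℝ × ℝ => ζ0 q.1 f q.2)) :
    ∀ n : ℕ, 1 ≤ n → ∀ f : ι, ∀ u ∈ Set.Icc (0 : ℝ) t,
      (∫ x in Set.Icc (0 : ℝ) 1, |Φ^[n] ξ0 x f u - Φ^[n] ζ0 x f u| ^ p) ^ (1 / p) ≤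
        (2 * C) ^ n * u ^ n / (n.factorial : ℝ) := by
  intro n _ f u hu
  have hΦ : ∀ ξ, IsMeasurableUnitFamily ξ → IsMeasurableUnitFamily (Φ ξ) :=
    fun ξ hξ => ⟨hrange ξ hξ.1, hmeas ξ hξ.1⟩
  calc lpDist p (Φ^[n] ξ0) (Φ^[n] ζ0) f u
      ≤ C ^ n / n.factorial * u ^ n :=
        lpDist_iterate_le hC hp hΦ (fun ξ ζ hξ hζ => hLip ξ ζ hξ.1 hζ.1) ⟨hξ0, hξ0m⟩
          ⟨hζ0, hζ0m⟩ n f u hu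
    _ ≤ (2 * C) ^ n * u ^ n / n.factorial := by
        rw [div_mul_eq_mul_div]
        gcongr
        · exact pow_nonneg hu.1 n
        · linarith

/-- Contraction of the transform-domain operator `Φ`: if `Φ` preserves `[0,1]`-valued
families, preserves measurability, and satisfies the Lipschitz-type bound
`∫₀¹ |Φ_x(ξ)(f,u) − Φ_x(ζ)(f,u)|^p dx ≤ C^p ∫₀¹ (∫₀ᵘ |ξ_y(f,s) − ζ_y(f,s)| ds)^p dy`,
then the iterates satisfy
`‖ξ_x⁽ⁿ⁾(f,u) − ζ_x⁽ⁿ⁾(f,u)‖_{L^p([0,1],dx)} ≤ (2C)ⁿ uⁿ / n!` for all `n ≥ 1`,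
`u ∈ [0,t]` and inputs `f`. -/
theorem stmt13 {ι : Type*} (t C p : ℝ) (ht : 0 < t) (hC : 0 ≤ C) (hp : 1 ≤ p)
    (Φ : (ℝ → ι → ℝ → ℝ) → (ℝ → ι → ℝ → ℝ))
    (hrange : ∀ ξ, (∀ x f u, ξ x f u ∈ Set.Icc (0 : ℝ) 1) →
      ∀ x f u, Φ ξ x f u ∈ Set.Icc (0 : ℝ) 1)
    (hmeas : ∀ ξ, (∀ x f u, ξ x f u ∈ Set.Icc (0 : ℝ) 1) →
      ∀ f : ι, Measurable (fun q : ℝ × ℝ => Φ ξ q.1 f q.2))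
    (hLip : ∀ ξ ζ, (∀ x f u, ξ x f u ∈ Set.Icc (0 : ℝ) 1) →
      (∀ x f u, ζ x f u ∈ Set.Icc (0 : ℝ) 1) →
      ∀ f : ι, ∀ u ∈ Set.Icc (0 : ℝ) t,
        ∫ x in Set.Icc (0 : ℝ) 1, |Φ ξ x f u - Φ ζ x f u| ^ p ≤
          C ^ p * ∫ y in Set.Icc (0 : ℝ) 1,
            (∫ s in Set.Icc (0 : ℝ) u, |ξ y f s - ζ y f s|) ^ p)
    (ξ0 ζ0 : ℝ → ι → ℝ → ℝ)
    (hξ0 : ∀ x f u, ξ0 x f u ∈ Set.Icc (0 : ℝ) 1)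
    (hζ0 : ∀ x f u, ζ0 x f u ∈ Set.Icc (0 : ℝ) 1)
    (hξ0m : ∀ f : ι, Measurable (fun q : ℝ × ℝ => ξ0 q.1 f q.2))
    (hζ0m : ∀ f : ι, Measurable (fun q : ℝ × ℝ => ζ0 q.1 f q.2)) :
    ∀ n : ℕ, 1 ≤ n → ∀ f : ι, ∀ u ∈ Set.Icc (0 : ℝ) t,
      (∫ x in Set.Icc (0 : ℝ) 1, |Φ^[n] ξ0 x f u - Φ^[n] ζ0 x f u| ^ p) ^ (1 / p) ≤
        (2 * C) ^ n * u ^ n / (n.factorial : ℝ) :=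
  stmt13_general t C p hC hp Φ hrange hmeas hLip ξ0 ζ0 hξ0 hζ0 hξ0m hζ0m
end

section
/- Fix t > 0 and constants C_B, C_W, ‖h‖_∞ ≥ 0 and p ∈ [1,∞). Let Φ be the map on families ξ = (ξ_x)_{x∈[0,1]} of [0,1]-valued functions defined by Φ_x(ξ)(f,u) = γ_x(f,u)·E[exp(∫₀¹ ∫₀ᵘ (ξ_y(f,u−s) − 1) B_{yx} W(y,x) h(s) ds dy)], where γ_x(f,u) ∈ [0,1], 0 ≤ W ≤ C_W, E[B_{yx}] ≤ C_B, 0 ≤ h ≤ ‖h‖_∞. Then Φ is uniformly continuous with respect to the metric d(ξ,ζ) = sup_{u∈[0,t], f} ‖ξ_x(f,u) − ζ_x(f,u)‖_{L^p([0,1],dx)}: in fact d(Φ(ξ),Φ(ζ)) ≤ t‖h‖_∞ C_B C_W · d(ξ,ζ). -/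
/-!
Both exponents are nonpositive and `exp` is 1-Lipschitz on `(-∞, 0]`, so
`|Φ_x(ξ)(f,u) - Φ_x(ζ)(f,u)| ≤ E ∫₀¹ ∫₀ᵘ |ξ_y(f,u-s) - ζ_y(f,u-s)| B_{yx} W(y,x) h(s) ds dy`.
By Tonelli the expectation falls on `B_{yx}` alone, which leaves
`C_B C_W ‖h‖_∞ ∫₀ᵘ ‖ξ(f,u-s) - ζ(f,u-s)‖_{L¹[0,1]} ds`, and on the probability space `[0,1]`
the `L¹` norm is dominated by the `Lᵖ` norm. The resulting bound is uniform in `x`, hence also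
bounds the `Lᵖ` norm in `x`. The estimates are made for `‖·‖ₑ` and lower integrals, which need
no integrability side conditions.
-/
open MeasureTheory Set Function
open scoped ENNReal

theorem Real.abs_exp_sub_exp_le_of_nonpos {a b : ℝ} (ha : a ≤ 0) (hb : b ≤ 0) :
    |Real.exp a - Real.exp b| ≤ |a - b| := by
  wlog hba : b ≤ a generalizing a b
  · rw [abs_sub_comm, abs_sub_comm a]
    exact this hb ha (le_of_not_ge hba)
  have hexp : Real.exp a - Real.exp b = Real.exp a * (1 - Real.exp (b - a)) := by
    rw [mul_sub, ← Real.exp_add]; ring_nf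
  have h1 : 0 ≤ 1 - Real.exp (b - a) := by simp [Real.exp_le_one_iff, hba]
  have h2 : 1 - Real.exp (b - a) ≤ a - b := by linarith [Real.add_one_le_exp (b - a)]
  rw [hexp, abs_of_nonneg (by positivity), abs_of_nonneg (by linarith)]
  calc Real.exp a * (1 - Real.exp (b - a)) ≤ 1 * (a - b) :=
        mul_le_mul (Real.exp_le_one_iff.2 ha) h2 h1 zero_le_one
    _ = a - b := one_mul _

section
variable {α β Ω : Type*} [MeasurableSpace α] [MeasurableSpace β] [MeasurableSpace Ω]
  {μ : Measure α} {ν : Measure β}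

-- No integrability is needed: if only one of `F`, `G` is integrable, then `F - G` is not,
-- and the right-hand side is `∞`.
theorem enorm_integral_sub_integral_le {E : Type*} [NormedAddCommGroup E] [NormedSpace ℝ E]
    {F G : α → E}
    (hFG : AEStronglyMeasurable (fun a => F a - G a) μ) :
    ‖∫ a, F a ∂μ - ∫ a, G a ∂μ‖ₑ ≤ ∫⁻ a, ‖F a - G a‖ₑ ∂μ := by
  by_cases hd : Integrable (fun a => F a - G a) μ
  · by_cases hF : Integrable F μ
    · have hG : Integrable G μ := (hF.sub hd).congr (.of_forall fun _ => sub_sub_cancel _ _)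
      rw [← integral_sub hF hG]
      exact enorm_integral_le_lintegral_enorm _
    · have hG : ¬ Integrable G μ := fun hG =>
        hF ((hd.add hG).congr (.of_forall fun _ => sub_add_cancel _ _))
      simp [integral_undef hF, integral_undef hG]
  · have : ∫⁻ a, ‖F a - G a‖ₑ ∂μ = ∞ := by
      by_contra hfin
      exact hd ⟨hFG, lt_top_iff_ne_top.2 hfin⟩
    simp [this]


theorem enorm_integral_integral_sub_le [SFinite ν] {F G : α → β → ℝ}
    (hF : StronglyMeasurable (uncurry F)) (hG : StronglyMeasurable (uncurry G)) :
    ‖∫ a, ∫ b, F a b ∂ν ∂μ - ∫ a, ∫ b, G a b ∂ν ∂μ‖ₑ ≤ ∫⁻ a, ∫⁻ b, ‖F a b - G a b‖ₑ ∂ν ∂μ :=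
  (enorm_integral_sub_integral_le
    (hF.integral_prod_right'.sub hG.integral_prod_right').aestronglyMeasurable).trans
    (lintegral_mono fun _ => enorm_integral_sub_integral_le
      ((hF.comp_measurable measurable_prodMk_left).sub
        (hG.comp_measurable measurable_prodMk_left)).aestronglyMeasurable)

theorem enorm_integral_exp_sub_integral_exp_le [SFinite μ] [SFinite ν] {P : Measure Ω}
    {F G : Ω → α → β → ℝ}
    (hF : StronglyMeasurable fun q : (Ω × α) × β => F q.1.1 q.1.2 q.2)
    (hG : StronglyMeasurable fun q : (Ω × α) × β => G q.1.1 q.1.2 q.2)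
    (hF0 : ∀ ω a b, F ω a b ≤ 0) (hG0 : ∀ ω a b, G ω a b ≤ 0) :
    ‖∫ ω, Real.exp (∫ a, ∫ b, F ω a b ∂ν ∂μ) ∂P - ∫ ω, Real.exp (∫ a, ∫ b, G ω a b ∂ν ∂μ) ∂P‖ₑ
      ≤ ∫⁻ ω, ∫⁻ a, ∫⁻ b, ‖F ω a b - G ω a b‖ₑ ∂ν ∂μ ∂P := by
  have hexp : ∀ {H : Ω → α → β → ℝ},
      StronglyMeasurable (fun q : (Ω × α) × β => H q.1.1 q.1.2 q.2) →
      StronglyMeasurable fun ω => Real.exp (∫ a, ∫ b, H ω a b ∂ν ∂μ) := fun hH =>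
    Real.continuous_exp.comp_stronglyMeasurable hH.integral_prod_right'.integral_prod_right'
  have hsection : ∀ {H : Ω → α → β → ℝ},
      StronglyMeasurable (fun q : (Ω × α) × β => H q.1.1 q.1.2 q.2) →
      ∀ ω, StronglyMeasurable (uncurry (H ω)) := fun hH ω =>
    hH.comp_measurable ((measurable_const.prodMk measurable_fst).prodMk measurable_snd)
  refine (enorm_integral_sub_integral_le ((hexp hF).sub (hexp hG)).aestronglyMeasurable).trans
    (lintegral_mono fun ω => ?_)
  have hnonpos : ∀ {H : Ω → α → β → ℝ}, (∀ ω a b, H ω a b ≤ 0) →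
      ∫ a, ∫ b, H ω a b ∂ν ∂μ ≤ 0 := fun hH0 =>
    integral_nonpos fun _ => integral_nonpos fun _ => hH0 ω _ _
  calc ‖Real.exp (∫ a, ∫ b, F ω a b ∂ν ∂μ) - Real.exp (∫ a, ∫ b, G ω a b ∂ν ∂μ)‖ₑ
      ≤ ‖∫ a, ∫ b, F ω a b ∂ν ∂μ - ∫ a, ∫ b, G ω a b ∂ν ∂μ‖ₑ := by
        simp only [Real.enorm_eq_ofReal_abs]
        exact ENNReal.ofReal_le_ofReal
          (Real.abs_exp_sub_exp_le_of_nonpos (hnonpos hF0) (hnonpos hG0))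
    _ ≤ _ := enorm_integral_integral_sub_le (hsection hF ω) (hsection hG ω)

theorem lintegral_lintegral_mul_le [SFinite μ] {P : Measure Ω} [SFinite P] {b : α → Ω → ℝ≥0∞}
    {D : α → ℝ≥0∞} {C : ℝ≥0∞} (hb : Measurable (uncurry b)) (hD : Measurable D)
    (hbC : ∀ a, ∫⁻ ω, b a ω ∂P ≤ C) :
    ∫⁻ ω, ∫⁻ a, b a ω * D a ∂μ ∂P ≤ C * ∫⁻ a, D a ∂μ := by
  rw [lintegral_lintegral_swap (by fun_prop)]
  calc ∫⁻ a, ∫⁻ ω, b a ω * D a ∂P ∂μ = ∫⁻ a, (∫⁻ ω, b a ω ∂P) * D a ∂μ :=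
        lintegral_congr fun a => lintegral_mul_const _ (hb.comp measurable_prodMk_left)
    _ ≤ ∫⁻ a, C * D a ∂μ := lintegral_mono fun a => mul_le_mul_left (hbC a) _
    _ = C * ∫⁻ a, D a ∂μ := lintegral_const_mul _ hD

theorem lintegral_enorm_le_integral_rpow_abs [IsProbabilityMeasure μ] {p : ℝ} (hp : 1 ≤ p)
    {d : α → ℝ} (hd : MemLp d (ENNReal.ofReal p) μ) :
    ∫⁻ a, ‖d a‖ₑ ∂μ ≤ ENNReal.ofReal ((∫ a, |d a| ^ p ∂μ) ^ (1 / p)) := by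
  rw [← eLpNorm_one_eq_lintegral_enorm]
  refine (eLpNorm_le_eLpNorm_of_exponent_le (ENNReal.one_le_ofReal.2 hp)
    hd.aestronglyMeasurable).trans_eq ?_
  rw [hd.eLpNorm_eq_integral_rpow_norm (by simp; linarith) ENNReal.ofReal_ne_top,
    ENNReal.toReal_ofReal (by linarith), one_div]
  rfl

theorem integral_rpow_abs_rpow_one_div_le [IsProbabilityMeasure μ] {p C : ℝ} (hp : 0 < p)
    {g : α → ℝ} (hg : ∀ a, |g a| ≤ C) :
    (∫ a, |g a| ^ p ∂μ) ^ (1 / p) ≤ C := by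
  obtain ⟨a₀⟩ := nonempty_of_isProbabilityMeasure μ
  have hC : 0 ≤ C := (abs_nonneg _).trans (hg a₀)
  have hint : ∫ a, |g a| ^ p ∂μ ≤ C ^ p := by
    refine (integral_mono_of_nonneg (.of_forall fun a => by positivity) (integrable_const _)
      (.of_forall fun a => Real.rpow_le_rpow (abs_nonneg _) (hg a) hp.le)).trans_eq ?_
    simp
  calc (∫ a, |g a| ^ p ∂μ) ^ (1 / p) ≤ (C ^ p) ^ (1 / p) :=
        Real.rpow_le_rpow (integral_nonneg fun a => by positivity) hint (by positivity)
    _ = C := by rw [one_div, Real.rpow_rpow_inv hC hp.ne']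

end

instance isProbabilityMeasure_volume_restrict_Icc_zero_one :
    IsProbabilityMeasure (volume.restrict (Icc (0 : ℝ) 1)) :=
  ⟨by simp⟩

theorem lintegral_lintegral_enorm_sub_le {p M t u : ℝ} (hp : 1 ≤ p) {g₁ g₂ : ℝ → ℝ → ℝ}
    (hg₁ : ∀ y v, g₁ y v ∈ Icc (0 : ℝ) 1) (hg₂ : ∀ y v, g₂ y v ∈ Icc (0 : ℝ) 1)
    (hg₁m : Measurable (uncurry g₁)) (hg₂m : Measurable (uncurry g₂))
    (hM : ∀ v ∈ Icc 0 t, (∫ y in Icc (0 : ℝ) 1, |g₁ y v - g₂ y v| ^ p) ^ (1 / p) ≤ M)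
    (hu : u ∈ Icc 0 t) :
    ∫⁻ y in Icc (0 : ℝ) 1, ∫⁻ s in Icc (0 : ℝ) u, ‖g₁ y (u - s) - g₂ y (u - s)‖ₑ ≤
      ENNReal.ofReal M * ENNReal.ofReal u := by
  rw [lintegral_lintegral_swap (by fun_prop)]
  refine (setLIntegral_mono measurable_const fun s hs => ?_).trans_eq
    (by rw [setLIntegral_const, Real.volume_Icc, sub_zero])
  have hmeas : Measurable fun y => g₁ y (u - s) - g₂ y (u - s) := by fun_prop
  have hbound : ∀ y, ‖g₁ y (u - s) - g₂ y (u - s)‖ ≤ 1 := fun y => by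
    rw [Real.norm_eq_abs, abs_le]
    obtain ⟨h₁0, h₁1⟩ := hg₁ y (u - s)
    obtain ⟨h₂0, h₂1⟩ := hg₂ y (u - s)
    constructor <;> linarith
  exact (lintegral_enorm_le_integral_rpow_abs hp
    (.of_bound hmeas.aestronglyMeasurable 1 (.of_forall hbound))).trans
    (ENNReal.ofReal_le_ofReal (hM (u - s) ⟨by linarith [hs.2], by linarith [hs.1, hu.2]⟩))

theorem abs_integral_exp_sub_integral_exp_le {Ω : Type*} [MeasurableSpace Ω] {P : Measure Ω}
    [IsProbabilityMeasure P] {p CB CW hsup t M u : ℝ} {b : ℝ → Ω → ℝ}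
    {w h : ℝ → ℝ} {g₁ g₂ : ℝ → ℝ → ℝ} (hp : 1 ≤ p) (hCB : 0 ≤ CB) (hCW : 0 ≤ CW)
    (hhs : 0 ≤ hsup) (hb0 : ∀ y ω, 0 ≤ b y ω) (hbint : ∀ y, Integrable (b y) P)
    (hbmean : ∀ y, ∫ ω, b y ω ∂P ≤ CB) (hbm : Measurable (uncurry b))
    (hw : ∀ y, w y ∈ Icc 0 CW) (hwm : Measurable w) (hh : ∀ s, h s ∈ Icc 0 hsup)
    (hhm : Measurable h) (hg₁ : ∀ y v, g₁ y v ∈ Icc (0 : ℝ) 1)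
    (hg₂ : ∀ y v, g₂ y v ∈ Icc (0 : ℝ) 1) (hg₁m : Measurable (uncurry g₁))
    (hg₂m : Measurable (uncurry g₂))
    (hM : ∀ v ∈ Icc 0 t, (∫ y in Icc (0 : ℝ) 1, |g₁ y v - g₂ y v| ^ p) ^ (1 / p) ≤ M)
    (hu : u ∈ Icc 0 t) :
    |∫ ω, Real.exp (∫ y in Icc (0 : ℝ) 1, ∫ s in Icc (0 : ℝ) u,
        (g₁ y (u - s) - 1) * (b y ω * (w y * h s))) ∂P -
      ∫ ω, Real.exp (∫ y in Icc (0 : ℝ) 1, ∫ s in Icc (0 : ℝ) u,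
        (g₂ y (u - s) - 1) * (b y ω * (w y * h s))) ∂P| ≤ t * hsup * CB * CW * M := by
  have hM0 : 0 ≤ M := (Real.rpow_nonneg (setIntegral_nonneg measurableSet_Icc
    fun _ _ => by positivity) _).trans (hM u hu)
  have ht : 0 ≤ t := hu.1.trans hu.2
  set c := ENNReal.ofReal (CW * hsup)
  set d : ℝ → ℝ → ℝ≥0∞ := fun y s => ‖g₁ y (u - s) - g₂ y (u - s)‖ₑ
  have hkernel0 : ∀ y ω s, 0 ≤ b y ω * (w y * h s) := fun y ω s =>
    mul_nonneg (hb0 y ω) (mul_nonneg (hw y).1 (hh s).1)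
  have hintegrand : ∀ ω y s, ‖(g₁ y (u - s) - 1) * (b y ω * (w y * h s)) -
      (g₂ y (u - s) - 1) * (b y ω * (w y * h s))‖ₑ ≤ ‖b y ω‖ₑ * (c * d y s) := by
    intro ω y s
    have hwh : ‖w y * h s‖ₑ ≤ c := by
      rw [← ofReal_norm, Real.norm_eq_abs,
        abs_of_nonneg (mul_nonneg (hw y).1 (hh s).1)]
      exact ENNReal.ofReal_le_ofReal (mul_le_mul (hw y).2 (hh s).2 (hh s).1 hCW)
    calc _ = ‖b y ω‖ₑ * (‖w y * h s‖ₑ * d y s) := by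
          rw [← enorm_mul, ← enorm_mul]; ring_nf
      _ ≤ ‖b y ω‖ₑ * (c * d y s) := by gcongr
  have hbexp : ∀ y, ∫⁻ ω, ‖b y ω‖ₑ ∂P ≤ ENNReal.ofReal CB := fun y => by
    rw [lintegral_enorm_of_nonneg (hb0 y), ← ofReal_integral_eq_lintegral_ofReal (hbint y)
      (.of_forall (hb0 y))]
    exact ENNReal.ofReal_le_ofReal (hbmean y)
  rw [← ENNReal.ofReal_le_ofReal_iff (by positivity), ← Real.enorm_eq_ofReal_abs]
  calc _ ≤ _ := enorm_integral_exp_sub_integral_exp_le (by fun_prop) (by fun_prop)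
        (fun ω y s => mul_nonpos_of_nonpos_of_nonneg (by linarith [(hg₁ y (u - s)).2])
          (hkernel0 y ω s))
        (fun ω y s => mul_nonpos_of_nonpos_of_nonneg (by linarith [(hg₂ y (u - s)).2])
          (hkernel0 y ω s))
    _ ≤ ∫⁻ ω, (∫⁻ y in Icc (0 : ℝ) 1, ‖b y ω‖ₑ * ∫⁻ s in Icc (0 : ℝ) u, c * d y s) ∂P :=
        lintegral_mono fun ω => lintegral_mono fun y =>
          (lintegral_mono (hintegrand ω y)).trans_eq (lintegral_const_mul' _ _ enorm_ne_top)
    _ ≤ ENNReal.ofReal CB * ∫⁻ y in Icc (0 : ℝ) 1, ∫⁻ s in Icc (0 : ℝ) u, c * d y s :=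
        lintegral_lintegral_mul_le (by fun_prop) (by fun_prop) hbexp
    _ = ENNReal.ofReal CB * (c * ∫⁻ y in Icc (0 : ℝ) 1, ∫⁻ s in Icc (0 : ℝ) u, d y s) := by
        simp_rw [lintegral_const_mul' c _ ENNReal.ofReal_ne_top]
    _ ≤ ENNReal.ofReal CB * (c * (ENNReal.ofReal M * ENNReal.ofReal u)) := by
        gcongr _ * (_ * ?_)
        exact lintegral_lintegral_enorm_sub_le hp hg₁ hg₂ hg₁m hg₂m hM hu
    _ = ENNReal.ofReal (u * hsup * CB * CW * M) := by
        rw [← ENNReal.ofReal_mul hM0,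
          ← ENNReal.ofReal_mul (by positivity), ← ENNReal.ofReal_mul hCB]
        ring_nf
    _ ≤ ENNReal.ofReal (t * hsup * CB * CW * M) := by
        gcongr
        exact hu.2

theorem stmt14_general {ι Ω : Type*} [MeasurableSpace Ω] (P : Measure Ω) [IsProbabilityMeasure P]
    (t p CB CW hsup : ℝ) (hp : 1 ≤ p)
    (hCB : 0 ≤ CB) (hCW : 0 ≤ CW) (hhs : 0 ≤ hsup)
    (W : ℝ → ℝ → ℝ) (B : ℝ → ℝ → Ω → ℝ) (h : ℝ → ℝ) (γ : ℝ → ι → ℝ → ℝ)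
    (hW : ∀ y x, W y x ∈ Set.Icc (0 : ℝ) CW)
    (hh : ∀ s, h s ∈ Set.Icc (0 : ℝ) hsup)
    (hγ : ∀ x f u, γ x f u ∈ Set.Icc (0 : ℝ) 1)
    (hB0 : ∀ y x ω, 0 ≤ B y x ω)
    (hBint : ∀ y x, Integrable (B y x) P)
    (hBmean : ∀ y x, ∫ ω, B y x ω ∂P ≤ CB)
    (hBmeas : ∀ x, Measurable (fun q : ℝ × Ω => B q.1 x q.2))
    (hWmeas : Measurable (Function.uncurry W))
    (hhmeas : Measurable h)
    (Φ : (ℝ → ι → ℝ → ℝ) → (ℝ → ι → ℝ → ℝ))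
    (hΦ : ∀ ξ x f u, Φ ξ x f u = γ x f u *
      ∫ ω, Real.exp (∫ y in Set.Icc (0 : ℝ) 1, ∫ s in Set.Icc (0 : ℝ) u,
        (ξ y f (u - s) - 1) * (B y x ω * (W y x * h s))) ∂P) :
    ∀ ξ ζ : ℝ → ι → ℝ → ℝ,
      (∀ x f u, ξ x f u ∈ Set.Icc (0 : ℝ) 1) →
      (∀ x f u, ζ x f u ∈ Set.Icc (0 : ℝ) 1) →
      (∀ f : ι, Measurable (fun q : ℝ × ℝ => ξ q.1 f q.2)) →
      (∀ f : ι, Measurable (fun q : ℝ × ℝ => ζ q.1 f q.2)) →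
      ∀ M : ℝ,
        (∀ f : ι, ∀ u ∈ Set.Icc (0 : ℝ) t,
          (∫ x in Set.Icc (0 : ℝ) 1, |ξ x f u - ζ x f u| ^ p) ^ (1 / p) ≤ M) →
        ∀ f : ι, ∀ u ∈ Set.Icc (0 : ℝ) t,
          (∫ x in Set.Icc (0 : ℝ) 1, |Φ ξ x f u - Φ ζ x f u| ^ p) ^ (1 / p) ≤
            t * hsup * CB * CW * M := by
  intro ξ ζ hξ hζ hξm hζm M hM f u hu
  refine integral_rpow_abs_rpow_one_div_le (by linarith) fun x => ?_
  have hγx : |γ x f u| ≤ 1 := abs_le.2 ⟨by linarith [(hγ x f u).1], (hγ x f u).2⟩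
  rw [hΦ, hΦ, ← mul_sub, abs_mul]
  refine (mul_le_of_le_one_left (abs_nonneg _) hγx).trans ?_
  exact abs_integral_exp_sub_integral_exp_le (w := fun y => W y x) hp hCB hCW hhs
    (fun y => hB0 y x) (fun y => hBint y x) (fun y => hBmean y x) (hBmeas x) (fun y => hW y x)
    (by fun_prop) hh hhmeas (fun y => hξ y f) (fun y => hζ y f) (hξm f) (hζm f) (hM f) hu

/-- Uniform continuity (in fact a Lipschitz bound) of the transform-domain operator
`Φ_x(ξ)(f,u) = γ_x(f,u) · E[exp(∫₀¹∫₀ᵘ (ξ_y(f,u−s) − 1) B_{yx} W(y,x) h(s) ds dy)]`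
with respect to the metric `d(ξ,ζ) = sup_{u∈[0,t],f} ‖ξ_x(f,u) − ζ_x(f,u)‖_{L^p(dx)}`:
`d(Φ(ξ),Φ(ζ)) ≤ t·‖h‖_∞·C_B·C_W · d(ξ,ζ)`. -/
theorem stmt14 {ι Ω : Type*} [MeasurableSpace Ω] (P : Measure Ω) [IsProbabilityMeasure P]
    (t p CB CW hsup : ℝ) (ht : 0 < t) (hp : 1 ≤ p)
    (hCB : 0 ≤ CB) (hCW : 0 ≤ CW) (hhs : 0 ≤ hsup)
    (W : ℝ → ℝ → ℝ) (B : ℝ → ℝ → Ω → ℝ) (h : ℝ → ℝ) (γ : ℝ → ι → ℝ → ℝ)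
    (hW : ∀ y x, W y x ∈ Set.Icc (0 : ℝ) CW)
    (hh : ∀ s, h s ∈ Set.Icc (0 : ℝ) hsup)
    (hγ : ∀ x f u, γ x f u ∈ Set.Icc (0 : ℝ) 1)
    (hB0 : ∀ y x ω, 0 ≤ B y x ω)
    (hBint : ∀ y x, Integrable (B y x) P)
    (hBmean : ∀ y x, ∫ ω, B y x ω ∂P ≤ CB)
    (hBmeas : ∀ x, Measurable (fun q : ℝ × Ω => B q.1 x q.2))
    (hWmeas : Measurable (Function.uncurry W))
    (hhmeas : Measurable h)
    (Φ : (ℝ → ι → ℝ → ℝ) → (ℝ → ι → ℝ → ℝ))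
    (hΦ : ∀ ξ x f u, Φ ξ x f u = γ x f u *
      ∫ ω, Real.exp (∫ y in Set.Icc (0 : ℝ) 1, ∫ s in Set.Icc (0 : ℝ) u,
        (ξ y f (u - s) - 1) * (B y x ω * (W y x * h s))) ∂P) :
    ∀ ξ ζ : ℝ → ι → ℝ → ℝ,
      (∀ x f u, ξ x f u ∈ Set.Icc (0 : ℝ) 1) →
      (∀ x f u, ζ x f u ∈ Set.Icc (0 : ℝ) 1) →
      (∀ f : ι, Measurable (fun q : ℝ × ℝ => ξ q.1 f q.2)) →
      (∀ f : ι, Measurable (fun q : ℝ × ℝ => ζ q.1 f q.2)) →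
      ∀ M : ℝ,
        (∀ f : ι, ∀ u ∈ Set.Icc (0 : ℝ) t,
          (∫ x in Set.Icc (0 : ℝ) 1, |ξ x f u - ζ x f u| ^ p) ^ (1 / p) ≤ M) →
        ∀ f : ι, ∀ u ∈ Set.Icc (0 : ℝ) t,
          (∫ x in Set.Icc (0 : ℝ) 1, |Φ ξ x f u - Φ ζ x f u| ^ p) ^ (1 / p) ≤
            t * hsup * CB * CW * M :=
  stmt14_general P t p CB CW hsup hp hCB hCW hhs W B h γ hW hh hγ hB0 hBint hBmean hBmeas hWmeas
    hhmeas Φ hΦ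
end
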